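/- For every n ≥ 1, the total number of P3-matches over all words in 𝓛_n equals the total number of P2-matches over all words in 𝓛_n: Σ_{L ∈ 𝓛_n} P3-mch(L) = Σ_{L ∈ 𝓛_n} P2-mch(L). -/

import Mathlib

/-!
Words over the alphabet {E, N} are encoded as `List Bool`,
with `true` representing an east step `E` and `false` a north step `N`.
The word `w = w_1 ⋯ w_{2n}` corresponds to the lattice path from `(0,0)` to
`(n,n)` whose `j`-th step is east if `w_j = true` and north if `w_j = false`.
-/

/-- `w ∈ 𝓛_n`: the word `w` has exactly `n` `E`'s and `n` `N`'s. -/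
def memL (n : ℕ) (w : List Bool) : Prop :=
  w.count true = n ∧ w.count false = n

/-- The (0-indexed, increasing) list of positions at which the letter `b` occurs in `w`. -/
def occPos (w : List Bool) (b : Bool) : List ℕ :=
  (List.range w.length).filter (fun j => w.getD j (!b) == b)

/-- `ps_w({i, i+1})` (with `i` 1-indexed): the length-4 word obtained from `w` by
deleting, for each `j ∉ {i, i+1}`, the `j`-th occurrence of `E` and the `j`-th
occurrence of `N` (counted from left to right); i.e. the word formed by the
`i`-th and `(i+1)`-th occurrences of `E` and of `N`, read in their original order. -/
def pairedSubword (w : List Bool) (i : ℕ) : List Bool :=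
  let keep : List ℕ := [(occPos w true).getD (i-1) 0, (occPos w true).getD i 0,
                        (occPos w false).getD (i-1) 0, (occPos w false).getD i 0]
  ((List.range w.length).filter (fun j => keep.contains j)).map (fun j => w.getD j true)

/-- `P`-mch(w): the number of paired steps `i` with `1 ≤ i ≤ n-1` at which the
paired pattern `P` matches in `w ∈ 𝓛_n`. -/
def pmch (n : ℕ) (P w : List Bool) : ℕ :=
  ((Finset.Icc 1 (n-1)).filter (fun i => pairedSubword w i = P)).card

def P1 : List Bool := [true, true, false, false]   -- EENN
def P2 : List Bool := [true, false, true, false]   -- ENEN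
def P3 : List Bool := [false, true, true, false]   -- NEEN
def P4 : List Bool := [true, false, false, true]   -- ENNE
def P5 : List Bool := [false, true, false, true]   -- NENE
def P6 : List Bool := [false, false, true, true]   -- NNEE

/-!
Fix `1 ≤ i < n` and let `p₀ < p₁` and `q₀ < q₁` be the positions of the `i`-th and `(i+1)`-th
`E` and `N`. The paired subword at `i` is `NEEN` or `ENEN` exactly when `max p₀ q₀ < p₁ < q₁`.
Counting the letters before these positions, this happens iff the path passes through the
diagonal point `(i, i)`, arriving there by an `E` step (for `NEEN`) or an `N` step (for `ENEN`)
and leaving it by an `E` step. Reflecting the first `2i` steps in the diagonal keeps the path in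
`𝓛_n`, swaps the two ways of arriving and is an involution, so for each `i` the two patterns
match equally many words of `𝓛_n`.
-/

open Finset

theorem memL.count_eq {n : ℕ} {w : List Bool} (h : memL n w) (b : Bool) : w.count b = n := by
  cases b
  exacts [h.2, h.1]

theorem count_take_add_one {α : Type*} [DecidableEq α] {w : List α} {m : ℕ} {y : α}
    (hy : w[m]? = some y) (b : α) :
    (w.take (m + 1)).count b = (w.take m).count b + if y = b then 1 else 0 := by
  rw [List.take_add_one, hy, Option.toList_some, List.count_append, List.count_singleton]
  simp

theorem count_map_not (l : List Bool) (b : Bool) : (l.map not).count b = l.count (!b) := by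
  simpa using List.count_map_of_injective l not Bool.not_injective (!b)

/-- Position of the `k`-th (0-indexed) occurrence of `b` in `w`, with junk value `0` when `w`
has at most `k` occurrences of `b`; `pairedSubword w i` keeps exactly the letters at
`nthOcc w b (i-1)` and `nthOcc w b i` for both letters `b`. -/
def nthOcc (w : List Bool) (b : Bool) (k : ℕ) : ℕ := (occPos w b).getD k 0

section Occurrences

variable {w : List Bool} {b : Bool} {k : ℕ}

theorem occPos_append (u v : List Bool) (b : Bool) :
    occPos (u ++ v) b = occPos u b ++ (occPos v b).map (· + u.length) := by
  rw [occPos, List.length_append, List.range_add, List.filter_append, List.filter_map]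
  congr 1
  · refine List.filter_congr fun j hj => ?_
    rw [List.getD_append _ _ _ _ (List.mem_range.1 hj)]
  · rw [occPos]
    congr 1
    · exact funext fun j => Nat.add_comm _ _
    · refine List.filter_congr fun j _ => ?_
      simp [List.getElem?_append_right]

theorem length_occPos (w : List Bool) (b : Bool) : (occPos w b).length = w.count b := by
  induction w with
  | nil => rfl
  | cons x w ih =>
    rw [← List.singleton_append, occPos_append, List.length_append, List.length_map, ih,
      List.count_append]
    cases x <;> cases b <;> rfl

theorem mem_occPos {p : ℕ} : p ∈ occPos w b ↔ w[p]? = some b := by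
  simp only [occPos, List.mem_filter, List.mem_range, List.getD_eq_getElem?_getD, beq_iff_eq]
  constructor
  · rintro ⟨hp, h⟩
    simpa [List.getElem?_eq_getElem hp] using h
  · intro h
    obtain ⟨hp, -⟩ := List.getElem?_eq_some_iff.1 h
    simpa [h] using hp

theorem pairwise_lt_occPos (w : List Bool) (b : Bool) : (occPos w b).Pairwise (· < ·) :=
  List.pairwise_lt_range.filter _

theorem getElem?_nthOcc (hk : k < w.count b) : w[nthOcc w b k]? = some b := by
  rw [← length_occPos] at hk
  rw [nthOcc, List.getD_eq_getElem _ _ hk]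
  exact mem_occPos.1 (List.getElem_mem hk)

theorem nthOcc_lt_length (hk : k < w.count b) : nthOcc w b k < w.length :=
  (List.getElem?_eq_some_iff.1 (getElem?_nthOcc hk)).1

theorem nthOcc_lt_nthOcc {k' : ℕ} (hk' : k' < w.count b) (h : k < k') :
    nthOcc w b k < nthOcc w b k' := by
  rw [← length_occPos] at hk'
  rw [nthOcc, nthOcc, List.getD_eq_getElem _ _ (h.trans hk'), List.getD_eq_getElem _ _ hk']
  exact List.pairwise_iff_getElem.1 (pairwise_lt_occPos w b) _ _ _ _ h

theorem nthOcc_true_ne_nthOcc_false {k l : ℕ} (hk : k < w.count true)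
    (hl : l < w.count false) : nthOcc w true k ≠ nthOcc w false l := fun h => by
  simpa [h, getElem?_nthOcc hl] using getElem?_nthOcc hk

theorem nthOcc_lt_iff (hk : k < w.count b) {m : ℕ} :
    nthOcc w b k < m ↔ k < (w.take m).count b := by
  have hsplit := occPos_append (w.take m) (w.drop m) b
  rw [List.take_append_drop] at hsplit
  have hk' : k < (occPos w b).length := by rwa [length_occPos]
  have hc := length_occPos (w.take m) b
  rw [nthOcc, List.getD_eq_getElem _ _ hk', List.getElem_of_eq hsplit]
  by_cases hkm : k < (w.take m).count b
  · rw [List.getElem_append_left (by omega)]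
    have hmem := mem_occPos.1 (List.getElem_mem (l := occPos (w.take m) b) (n := k) (by omega))
    have := (List.getElem?_eq_some_iff.1 hmem).1
    simp only [List.length_take] at this
    simp only [hkm, iff_true]
    omega
  · have hm : m ≤ w.length := by
      by_contra h
      rw [List.take_of_length_le (by omega)] at hkm
      exact hkm hk
    rw [List.getElem_append_right (by simp only [hc]; omega), List.getElem_map]
    simp [hm, hkm]

end Occurrences

section PairedSubword

variable {w : List Bool} {i : ℕ}

theorem pairedSubword_eq_of_lt (ht : i < w.count true) (hf : i < w.count false)
    {x₁ x₂ x₃ x₄ : ℕ} (h₁₂ : x₁ < x₂) (h₂₃ : x₂ < x₃) (h₃₄ : x₃ < x₄)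
    (hx : ∀ x, x ∈ [x₁, x₂, x₃, x₄] ↔
      x ∈ [nthOcc w true (i-1), nthOcc w true i, nthOcc w false (i-1), nthOcc w false i]) :
    pairedSubword w i = [x₁, x₂, x₃, x₄].map (w.getD · true) := by
  have hs : [x₁, x₂, x₃, x₄].Pairwise (· < ·) := by simp; omega
  have hlt : ∀ x ∈ [nthOcc w true (i-1), nthOcc w true i, nthOcc w false (i-1),
      nthOcc w false i], x < w.length := by
    simp only [List.mem_cons, List.not_mem_nil, or_false]
    rintro x (rfl | rfl | rfl | rfl) <;> exact nthOcc_lt_length (by omega)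
  refine congrArg (List.map _) ((List.pairwise_lt_range.filter _).eq_of_mem_iff hs fun x => ?_)
  rw [hx, List.mem_filter, List.mem_range, List.contains_iff_mem]
  exact ⟨And.right, fun h => ⟨hlt x h, h⟩⟩

theorem pairedSubword_eq_iff_lt (hi : 1 ≤ i) (ht : i < w.count true) (hf : i < w.count false)
    (x : Bool) :
    pairedSubword w i = [!x, x, true, false] ↔
      nthOcc w (!x) (i-1) < nthOcc w x (i-1) ∧ nthOcc w x (i-1) < nthOcc w true i ∧
        nthOcc w true i < nthOcc w false i := by
  have ht' : i - 1 < w.count true := by omega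
  have hf' : i - 1 < w.count false := by omega
  have hp := nthOcc_lt_nthOcc ht (show i - 1 < i by omega)
  have hq := nthOcc_lt_nthOcc hf (show i - 1 < i by omega)
  have h₁₁ := nthOcc_true_ne_nthOcc_false ht' hf'
  have h₁₂ := nthOcc_true_ne_nthOcc_false ht' hf
  have h₂₁ := nthOcc_true_ne_nthOcc_false ht hf'
  have h₂₂ := nthOcc_true_ne_nthOcc_false ht hf
  have hp₁ := getElem?_nthOcc ht'
  have hp₂ := getElem?_nthOcc ht
  have hq₁ := getElem?_nthOcc hf'
  have hq₂ := getElem?_nthOcc hf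
  rcases h₁₁.lt_or_gt with h₁₁ | h₁₁
  · rcases h₂₁.lt_or_gt with h₂₁ | h₂₁
    · rw [pairedSubword_eq_of_lt ht hf hp h₂₁ hq fun _ => Iff.rfl]
      cases x <;> simp [hp₁, hp₂, hq₁, hq₂] <;> omega
    rcases h₂₂.lt_or_gt with h₂₂ | h₂₂
    · rw [pairedSubword_eq_of_lt ht hf h₁₁ h₂₁ h₂₂ fun _ => by grind]
      cases x <;> simp [hp₁, hp₂, hq₁, hq₂] <;> omega
    · rw [pairedSubword_eq_of_lt ht hf h₁₁ hq h₂₂ fun _ => by grind]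
      cases x <;> simp [hp₁, hp₂, hq₁, hq₂] <;> omega
  · rcases h₂₂.lt_or_gt with h₂₂ | h₂₂
    · rw [pairedSubword_eq_of_lt ht hf h₁₁ hp h₂₂ fun _ => by grind]
      cases x <;> simp [hp₁, hp₂, hq₁, hq₂] <;> omega
    rcases h₁₂.lt_or_gt with h₁₂ | h₁₂
    · rw [pairedSubword_eq_of_lt ht hf h₁₁ h₁₂ h₂₂ fun _ => by grind]
      cases x <;> simp [hp₁, hp₂, hq₁, hq₂] <;> omega
    · rw [pairedSubword_eq_of_lt ht hf hq h₁₂ hp fun _ => by grind]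
      cases x <;> simp [hp₁, hp₂, hq₁, hq₂] <;> omega

end PairedSubword

instance (n : ℕ) : DecidablePred (memL n) := fun _ => inferInstanceAs (Decidable (_ ∧ _))

/-- The lattice path of `w` passes through the diagonal point `(i, i)`, reaching it by the
step `x` and leaving it by an east step. -/
def VisitsDiagonal (i : ℕ) (x : Bool) (w : List Bool) : Prop :=
  memL i (w.take (2 * i)) ∧ w[2 * i - 1]? = some x ∧ w[2 * i]? = some true

instance (i : ℕ) (x : Bool) : DecidablePred (VisitsDiagonal i x) := fun _ =>
  inferInstanceAs (Decidable (_ ∧ _ ∧ _))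

section VisitsDiagonal

variable {w : List Bool} {i : ℕ}

theorem visitsDiagonal_iff_lt (hi : 1 ≤ i) (ht : i < w.count true) (hf : i < w.count false)
    (x : Bool) :
    VisitsDiagonal i x w ↔
      nthOcc w (!x) (i-1) < nthOcc w x (i-1) ∧ nthOcc w x (i-1) < nthOcc w true i ∧
        nthOcc w true i < nthOcc w false i := by
  have hcount : ∀ b, i - 1 < w.count b := fun b => by cases b <;> omega
  constructor
  · rintro ⟨hdiag, hx, he⟩
    have hprev := count_take_add_one hx
    have hnext := count_take_add_one he
    rw [show 2 * i - 1 + 1 = 2 * i by omega] at hprev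
    have hx₁ : (w.take (2 * i - 1)).count x = i - 1 := by
      have := hprev x
      simp only [hdiag.count_eq, if_true] at this
      omega
    have hx₂ : (w.take (2 * i - 1)).count (!x) = i := by
      simpa [hdiag.count_eq] using (hprev (!x)).symm
    have ht₁ : (w.take (2 * i + 1)).count true = i + 1 := by
      simpa [hdiag.count_eq] using hnext true
    have hf₁ : (w.take (2 * i + 1)).count false = i := by
      simpa [hdiag.count_eq] using hnext false
    have h₁ := (nthOcc_lt_iff (hcount (!x)) (m := 2 * i - 1)).2 (by omega)
    have h₂ := mt (nthOcc_lt_iff (hcount x) (m := 2 * i - 1)).1 (by omega)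
    have h₃ := (nthOcc_lt_iff (hcount x) (m := 2 * i)).2 (by rw [hdiag.count_eq]; omega)
    have h₄ := mt (nthOcc_lt_iff ht (m := 2 * i)).1 (by rw [hdiag.count_eq]; omega)
    have h₅ := (nthOcc_lt_iff ht (m := 2 * i + 1)).2 (by omega)
    have h₆ := mt (nthOcc_lt_iff hf (m := 2 * i + 1)).1 (by omega)
    omega
  · rintro ⟨h₁, h₂, h₃⟩
    have hq₁ : nthOcc w false (i - 1) < nthOcc w true i := by
      cases x
      exacts [h₂, h₁.trans h₂]
    have hpt : (w.take (nthOcc w true i)).count true = i := by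
      have := (nthOcc_lt_iff (hcount true)).1 (nthOcc_lt_nthOcc ht (show i - 1 < i by omega))
      have := mt (nthOcc_lt_iff ht).2 (lt_irrefl _)
      omega
    have hpf : (w.take (nthOcc w true i)).count false = i := by
      have := (nthOcc_lt_iff (hcount false)).1 hq₁
      have := mt (nthOcc_lt_iff hf).2 (not_lt.2 h₃.le)
      omega
    have hp : nthOcc w true i = 2 * i := by
      have := List.count_true_add_count_false (w.take (nthOcc w true i))
      have := nthOcc_lt_length ht
      simp only [List.length_take] at *
      omega
    have hdiag : memL i (w.take (2 * i)) := hp ▸ ⟨hpt, hpf⟩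
    refine ⟨hdiag, ?_, hp ▸ getElem?_nthOcc ht⟩
    obtain ⟨y, hy⟩ : ∃ y, w[2 * i - 1]? = some y :=
      ⟨_, List.getElem?_eq_getElem (by have := nthOcc_lt_length ht; omega)⟩
    rw [hy]
    -- otherwise the `i`-th `!x` would sit at `2i - 1`, after the `i`-th `x`
    by_contra hyx
    obtain rfl : y = !x := by cases x <;> cases y <;> simp_all
    have hc := count_take_add_one hy (!x)
    rw [show 2 * i - 1 + 1 = 2 * i by omega, hdiag.count_eq, if_pos rfl] at hc
    have := mt (nthOcc_lt_iff (hcount (!x)) (m := 2 * i - 1)).1 (by omega)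
    omega

end VisitsDiagonal

theorem pairedSubword_eq_iff_visitsDiagonal {w : List Bool} {i : ℕ} (hi : 1 ≤ i)
    (ht : i < w.count true) (hf : i < w.count false) (x : Bool) :
    pairedSubword w i = [!x, x, true, false] ↔ VisitsDiagonal i x w :=
  (pairedSubword_eq_iff_lt hi ht hf x).trans (visitsDiagonal_iff_lt hi ht hf x).symm

theorem pairedSubword_eq_iff_visitsDiagonal_of_memL {n i : ℕ} {w : List Bool} (hw : memL n w)
    (hi : 1 ≤ i) (hin : i < n) (x : Bool) :
    pairedSubword w i = [!x, x, true, false] ↔ VisitsDiagonal i x w :=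
  pairedSubword_eq_iff_visitsDiagonal hi (hw.count_eq true ▸ hin) (hw.count_eq false ▸ hin) x

def flipPrefix (k : ℕ) (w : List Bool) : List Bool := (w.take k).map not ++ w.drop k

section FlipPrefix

variable {k : ℕ} {w : List Bool}

theorem take_flipPrefix : (flipPrefix k w).take k = (w.take k).map not := by
  rcases le_or_gt k w.length with h | h
  · exact List.take_left' (by simp [h])
  · simp [flipPrefix, List.drop_eq_nil_of_le h.le, List.take_of_length_le h.le, h.le]

theorem drop_flipPrefix : (flipPrefix k w).drop k = w.drop k := by
  rcases le_or_gt k w.length with h | h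
  · exact List.drop_left' (by simp [h])
  · simp [flipPrefix, List.drop_eq_nil_of_le h.le, List.take_of_length_le h.le, h.le]

theorem flipPrefix_involutive (k : ℕ) : Function.Involutive (flipPrefix k) := fun w => by
  rw [flipPrefix, take_flipPrefix, drop_flipPrefix, List.map_map]
  simp [Function.comp_def]

theorem count_flipPrefix {i : ℕ} (h : memL i (w.take k)) (b : Bool) :
    (flipPrefix k w).count b = w.count b := by
  rw [flipPrefix, List.count_append, count_map_not, h.count_eq, ← h.count_eq b,
    ← List.count_append, List.take_append_drop]

theorem getElem?_flipPrefix_of_lt {j : ℕ} (hj : j < k) :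
    (flipPrefix k w)[j]? = w[j]?.map not := by
  rw [← List.getElem?_take_of_lt hj, take_flipPrefix, List.getElem?_map,
    List.getElem?_take_of_lt hj]

theorem getElem?_flipPrefix_of_le {j : ℕ} (hj : k ≤ j) : (flipPrefix k w)[j]? = w[j]? := by
  rw [← Nat.add_sub_cancel' hj, ← List.getElem?_drop, drop_flipPrefix, List.getElem?_drop]

theorem memL_flipPrefix {i n : ℕ} (h : memL i (w.take k)) (hw : memL n w) :
    memL n (flipPrefix k w) :=
  ⟨(count_flipPrefix h true).trans hw.1, (count_flipPrefix h false).trans hw.2⟩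

end FlipPrefix

theorem visitsDiagonal_flipPrefix {i : ℕ} {x : Bool} {w : List Bool} (hi : 1 ≤ i)
    (h : VisitsDiagonal i x w) : VisitsDiagonal i (!x) (flipPrefix (2 * i) w) := by
  obtain ⟨hdiag, hx, he⟩ := h
  refine ⟨?_, ?_, ?_⟩
  · rw [take_flipPrefix]
    exact ⟨by rw [count_map_not]; exact hdiag.2, by rw [count_map_not]; exact hdiag.1⟩
  · rw [getElem?_flipPrefix_of_lt (by omega), hx, Option.map_some]
  · rw [getElem?_flipPrefix_of_le le_rfl, he]

theorem card_filter_visitsDiagonal_true_eq_false {i : ℕ} (hi : 1 ≤ i) (T : Finset (List Bool))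
    (hT : ∀ w x, VisitsDiagonal i x w → w ∈ T → flipPrefix (2 * i) w ∈ T) :
    #{w ∈ T | VisitsDiagonal i true w} = #{w ∈ T | VisitsDiagonal i false w} := by
  have hmaps : ∀ x, ∀ w ∈ T.filter (VisitsDiagonal i x),
      flipPrefix (2 * i) w ∈ T.filter (VisitsDiagonal i (!x)) := fun x w hw => by
    rw [Finset.mem_filter] at hw ⊢
    exact ⟨hT w x hw.2 hw.1, visitsDiagonal_flipPrefix hi hw.2⟩
  exact Finset.card_nbij' _ _ (hmaps true) (hmaps false)
    (fun w _ => flipPrefix_involutive _ w) (fun w _ => flipPrefix_involutive _ w)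

theorem finite_setOf_memL (n : ℕ) : {w | memL n w}.Finite :=
  (List.finite_length_eq Bool (2 * n)).subset fun w hw => by
    have := List.count_true_add_count_false w
    simp only [Set.mem_ofPred_eq, memL] at hw ⊢
    omega

theorem sum_pmch_eq_sum_card (T : Finset (List Bool)) (n : ℕ) (P : List Bool) :
    ∑ w ∈ T, pmch n P w = ∑ i ∈ Icc 1 (n - 1), #{w ∈ T | pairedSubword w i = P} := by
  simp only [pmch, Finset.card_filter]
  exact Finset.sum_comm

theorem total_P3_matches_eq_total_P2_matches_general (n : ℕ) :
    ∑ᶠ w ∈ {w : List Bool | memL n w}, pmch n P3 w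
      = ∑ᶠ w ∈ {w : List Bool | memL n w}, pmch n P2 w := by
  have hfin := finite_setOf_memL n
  rw [finsum_mem_eq_finite_toFinset_sum _ hfin, finsum_mem_eq_finite_toFinset_sum _ hfin,
    sum_pmch_eq_sum_card, sum_pmch_eq_sum_card]
  refine Finset.sum_congr rfl fun i hi => ?_
  obtain ⟨hi, hin⟩ : 1 ≤ i ∧ i < n := by rw [Finset.mem_Icc] at hi; omega
  have hmatch (x : Bool) : ∀ w ∈ hfin.toFinset,
      pairedSubword w i = [!x, x, true, false] ↔ VisitsDiagonal i x w := fun w hw =>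
    pairedSubword_eq_iff_visitsDiagonal_of_memL (hfin.mem_toFinset.1 hw) hi hin x
  calc #{w ∈ hfin.toFinset | pairedSubword w i = P3}
      = #{w ∈ hfin.toFinset | VisitsDiagonal i true w} :=
        congrArg _ (Finset.filter_congr (hmatch true))
    _ = #{w ∈ hfin.toFinset | VisitsDiagonal i false w} :=
        card_filter_visitsDiagonal_true_eq_false hi _ fun w _ hx hw =>
          hfin.mem_toFinset.2 (memL_flipPrefix hx.1 (hfin.mem_toFinset.1 hw))
    _ = #{w ∈ hfin.toFinset | pairedSubword w i = P2} :=
        congrArg _ (Finset.filter_congr (hmatch false)).symm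

theorem total_P3_matches_eq_total_P2_matches (n : ℕ) (hn : 1 ≤ n) :
    ∑ᶠ w ∈ {w : List Bool | memL n w}, pmch n P3 w
      = ∑ᶠ w ∈ {w : List Bool | memL n w}, pmch n P2 w :=
  total_P3_matches_eq_total_P2_matches_general n
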